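/- Fix an integer d ≥ 2 and a real number p₀ with 1 < p₀ ≤ 2. Suppose that for every ε > 0 there exists a constant c(ε) > 0 such that for every finite field F of odd characteristic, every nontrivial additive character e of F, and every g : F^d → ℂ, one has ‖ĝ‖_{L²(P,dσ)} ≤ c(ε) |F|^ε ‖g‖_{L^{p₀}(F^d)}. Then for every p with 1 ≤ p < p₀ there exists a constant C > 0 such that for every such F, e, and g : F^d → ℂ, one has ‖ĝ‖_{L²(P,dσ)} ≤ C ‖g‖_{L^{p}(F^d)}. -/

import Mathlib

/-!
By `TT*`, `∑_{ξ ∈ P} |ĝ(ξ)|²` pairs `g(x) conj g(x')` against the kernel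
`∑_ȳ e((x' - x)·(ȳ, ȳ·ȳ))`, a product of one-variable Gauss sums: it is `|F|^(d-1)` on the
diagonal, vanishes off it when `x_d = x'_d`, and has modulus `|F|^((d-1)/2)` otherwise. Hence
`‖ĝ‖_{L²(P)} ≤ ‖g‖₂ + |F|^(-(d-1)/4) ‖g‖₁`.

Now cut `g` at height `t = |F|^(-(d-1)/(4p)) ‖g‖_p`. The part below `t` has `L^{p₀}` norm smaller
than `‖g‖_p` by a power of `|F|` that absorbs the loss `|F|^ε` of the assumed estimate. The part
above `t` has `L²` norm at most `‖g‖_p` (as `p ≤ 2`) and, living on few points, `L¹` norm at most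
`|F|^((d-1)/4) ‖g‖_p`, so the bound above gives `2 ‖g‖_p` for it.
-/

open Finset

/-- The Fourier transform `ĝ(ξ) = ∑_{x ∈ F^d} g(x) e(−x·ξ)` of `g : F^d → ℂ`, restricted
to the paraboloid `P = {(x̄, x̄·x̄) : x̄ ∈ F^{d-1}} ⊆ F^d` and parameterized by
`ȳ ∈ F^{d-1}` (i.e. evaluated at `ξ = (ȳ, ȳ·ȳ)`). -/
noncomputable def fourierP {F : Type} [Field F] [Fintype F] {d : ℕ} (e : AddChar F ℂ)
    (g : (Fin (d - 1) → F) × F → ℂ) (y : Fin (d - 1) → F) : ℂ :=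
  ∑ x : (Fin (d - 1) → F) × F, g x * e (-(∑ i, x.1 i * y i + x.2 * ∑ i, y i * y i))

/-- `‖ĝ‖_{L²(P,dσ)} = (|F|^{-(d-1)} ∑_{ξ∈P} |ĝ(ξ)|²)^{1/2}`. -/
noncomputable def l2P {F : Type} [Field F] [Fintype F] {d : ℕ} (e : AddChar F ℂ)
    (g : (Fin (d - 1) → F) × F → ℂ) : ℝ :=
  (((Fintype.card F : ℝ) ^ (d - 1))⁻¹ *
    ∑ y : Fin (d - 1) → F, ‖fourierP e g y‖ ^ 2) ^ ((1 : ℝ) / 2)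

open ComplexConjugate

namespace AddChar

variable {A M ι : Type*}

lemma map_sum_eq_prod [AddCommMonoid A] [CommMonoid M] (ψ : AddChar A M) (s : Finset ι)
    (f : ι → A) : ψ (∑ i ∈ s, f i) = ∏ i ∈ s, ψ (f i) :=
  map_prod ψ.toMonoidHom (fun i => Multiplicative.ofAdd (f i)) s

lemma sum_pi_map_sum [AddCommMonoid A] [Fintype A] [CommSemiring M] [Fintype ι] [DecidableEq ι]
    (ψ : AddChar A M) (f : ι → A → A) :
    ∑ y : ι → A, ψ (∑ i, f i (y i)) = ∏ i, ∑ t, ψ (f i t) := by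
  simp_rw [map_sum_eq_prod]
  exact (Fintype.prod_sum fun i t => ψ (f i t)).symm

end AddChar

section QuadraticSum

variable {F : Type*} [Field F] [Fintype F] [DecidableEq F] {e : AddChar F ℂ}

lemma sum_mul_conj_sum_quadratic (he : e ≠ 1) (hF : ringChar F ≠ 2) (w : F) {a : F}
    (ha : a ≠ 0) :
    (∑ t, e (w * t + a * (t * t))) * conj (∑ t, e (w * t + a * (t * t))) =
      Fintype.card F := by
  set φ : F → F := fun t => w * t + a * (t * t)
  have hshift : ∀ s r, φ (s + r) - φ s = φ r + s * (2 * a * r) := fun s r => by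
    simp only [φ]; ring
  have h2a : ∀ r, 2 * a * r = 0 ↔ r = 0 := fun r => by
    simp [Ring.two_ne_zero hF, ha]
  calc (∑ t, e (φ t)) * conj (∑ t, e (φ t))
      = ∑ s, ∑ r, e (φ (s + r) - φ s) := by
        simp_rw [map_sum, ← AddChar.map_neg_eq_conj, Fintype.sum_mul_sum, sub_eq_add_neg,
          AddChar.map_add_eq_mul]
        rw [Finset.sum_comm]
        exact Finset.sum_congr rfl fun s _ =>
          (Fintype.sum_equiv (Equiv.addLeft s) _ _ fun r => rfl).symm
    _ = ∑ r, e (φ r) * ∑ s, e (s * (2 * a * r)) := by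
        rw [Finset.sum_comm]
        simp_rw [hshift, AddChar.map_add_eq_mul, Finset.mul_sum]
    _ = Fintype.card F := by
        simp_rw [AddChar.sum_mulShift _ (AddChar.IsPrimitive.of_ne_one he), h2a]
        simp [φ]

lemma norm_sum_quadratic (he : e ≠ 1) (hF : ringChar F ≠ 2) (w : F) {a : F} (ha : a ≠ 0) :
    ‖∑ t, e (w * t + a * (t * t))‖ = √(Fintype.card F) := by
  have h := sum_mul_conj_sum_quadratic he hF w ha
  rw [Complex.mul_conj, ← Complex.sq_norm] at h
  rw [← Real.sqrt_sq (norm_nonneg _)]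
  exact congrArg Real.sqrt (mod_cast h)

end QuadraticSum

section Paraboloid

variable {F : Type} [Field F] {n : ℕ}

/-- `x · (y, y·y)`, so that `fourierP e g y = ∑ x, g x * e (-paraPhase x y)` by definition. -/
def paraPhase (x : (Fin n → F) × F) (y : Fin n → F) : F :=
  ∑ i, x.1 i * y i + x.2 * ∑ i, y i * y i

lemma paraPhase_sub (x x' : (Fin n → F) × F) (y : Fin n → F) :
    paraPhase x' y - paraPhase x y = paraPhase (x' - x) y := by
  simp only [paraPhase, Prod.fst_sub, Prod.snd_sub, Pi.sub_apply, sub_mul,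
    Finset.sum_sub_distrib]
  ring

variable [Fintype F] {e : AddChar F ℂ}

lemma sum_paraPhase_eq_prod (z : (Fin n → F) × F) :
    ∑ y, e (paraPhase z y) = ∏ i, ∑ t, e (z.1 i * t + z.2 * (t * t)) := by
  simp_rw [← AddChar.sum_pi_map_sum, paraPhase, Finset.mul_sum, Finset.sum_add_distrib]

variable [DecidableEq F]

lemma sum_paraPhase_of_snd_eq_zero (he : e ≠ 1) {z : (Fin n → F) × F} (hz : z.2 = 0) :
    ∑ y, e (paraPhase z y) = if z = 0 then (Fintype.card F : ℂ) ^ n else 0 := by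
  have hz0 : z = 0 ↔ ∀ i, z.1 i = 0 := by
    rw [Prod.ext_iff, funext_iff]; simp [hz]
  simp_rw [sum_paraPhase_eq_prod, hz, zero_mul, add_zero, mul_comm (z.1 _)]
  rw [Finset.prod_congr rfl fun i _ =>
    AddChar.sum_mulShift (z.1 i) (AddChar.IsPrimitive.of_ne_one he)]
  simp [Finset.prod_ite_zero, hz0]

lemma norm_sum_paraPhase_of_snd_ne_zero (he : e ≠ 1) (hF : ringChar F ≠ 2)
    {z : (Fin n → F) × F} (hz : z.2 ≠ 0) :
    ‖∑ y, e (paraPhase z y)‖ = √((Fintype.card F : ℝ) ^ n) := by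
  rw [sum_paraPhase_eq_prod, norm_prod]
  simp_rw [norm_sum_quadratic he hF _ hz]
  rw [Finset.prod_const, Finset.card_univ, Fintype.card_fin,
    ← Real.sqrt_sq (pow_nonneg (Real.sqrt_nonneg _) n), ← pow_mul, mul_comm, pow_mul,
    Real.sq_sqrt (Nat.cast_nonneg _)]

lemma norm_sum_paraPhase_le (he : e ≠ 1) (hF : ringChar F ≠ 2) (z : (Fin n → F) × F) :
    ‖∑ y, e (paraPhase z y)‖ ≤
      (if z = 0 then (Fintype.card F : ℝ) ^ n else 0) + √((Fintype.card F : ℝ) ^ n) := by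
  by_cases hz : z.2 = 0
  · rw [sum_paraPhase_of_snd_eq_zero he hz]
    split_ifs <;> simp
  · have hz0 : z ≠ 0 := fun h => hz (by simp [h])
    rw [norm_sum_paraPhase_of_snd_ne_zero he hF hz, if_neg hz0, zero_add]

end Paraboloid

section FourierParaboloid

variable {F : Type} [Field F] [Fintype F] {d : ℕ} {e : AddChar F ℂ}

lemma fourierP_add (e : AddChar F ℂ) (u v : (Fin (d - 1) → F) × F → ℂ) :
    fourierP e (u + v) = fourierP e u + fourierP e v := by
  ext y
  simp only [fourierP, Pi.add_apply, add_mul, Finset.sum_add_distrib]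

lemma l2P_eq_mul_norm (e : AddChar F ℂ) (g : (Fin (d - 1) → F) × F → ℂ) :
    l2P e g = √(((Fintype.card F : ℝ) ^ (d - 1))⁻¹) *
      ‖(WithLp.toLp 2 (fourierP e g) : EuclideanSpace ℂ (Fin (d - 1) → F))‖ := by
  rw [l2P, ← Real.sqrt_eq_rpow, EuclideanSpace.norm_eq, Real.sqrt_mul (by positivity)]

lemma l2P_add_le (e : AddChar F ℂ) (u v : (Fin (d - 1) → F) × F → ℂ) :
    l2P e (u + v) ≤ l2P e u + l2P e v := by
  simp only [l2P_eq_mul_norm, fourierP_add, WithLp.toLp_add, ← mul_add]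
  gcongr
  exact norm_add_le _ _

lemma sum_norm_fourierP_sq (e : AddChar F ℂ) (g : (Fin (d - 1) → F) × F → ℂ) :
    ((∑ y, ‖fourierP e g y‖ ^ 2 : ℝ) : ℂ) =
      ∑ x, ∑ x', g x * conj (g x') * ∑ y, e (paraPhase (x' - x) y) := by
  have hpoint : ∀ y, (‖fourierP e g y‖ ^ 2 : ℂ) =
      ∑ x, ∑ x', g x * conj (g x') * e (paraPhase (x' - x) y) := fun y => by
    rw [← Complex.mul_conj', show fourierP e g y = ∑ x, g x * e (-paraPhase x y) from rfl,
      map_sum, Fintype.sum_mul_sum]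
    refine Finset.sum_congr rfl fun x _ => Finset.sum_congr rfl fun x' _ => ?_
    rw [map_mul, ← AddChar.map_neg_eq_conj, neg_neg, ← paraPhase_sub, sub_eq_add_neg,
      AddChar.map_add_eq_mul]
    ring
  push_cast
  simp_rw [hpoint, Finset.mul_sum]
  rw [Finset.sum_comm]
  exact Finset.sum_congr rfl fun x _ => Finset.sum_comm

lemma sum_norm_fourierP_sq_le (he : e ≠ 1) (hF : ringChar F ≠ 2)
    (g : (Fin (d - 1) → F) × F → ℂ) :
    ∑ y, ‖fourierP e g y‖ ^ 2 ≤ (Fintype.card F : ℝ) ^ (d - 1) * ∑ x, ‖g x‖ ^ 2 +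
      √((Fintype.card F : ℝ) ^ (d - 1)) * (∑ x, ‖g x‖) ^ 2 := by
  classical
  set N : ℝ := (Fintype.card F : ℝ) ^ (d - 1)
  calc ∑ y, ‖fourierP e g y‖ ^ 2
      = ‖((∑ y, ‖fourierP e g y‖ ^ 2 : ℝ) : ℂ)‖ := by
        rw [Complex.norm_real, Real.norm_of_nonneg (by positivity)]
    _ ≤ ∑ x, ∑ x', ‖g x‖ * ‖g x'‖ * ((if x' - x = 0 then N else 0) + √N) := by
        rw [sum_norm_fourierP_sq]
        refine (norm_sum_le _ _).trans (Finset.sum_le_sum fun x _ =>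
          (norm_sum_le _ _).trans (Finset.sum_le_sum fun x' _ => ?_))
        rw [norm_mul, norm_mul, Complex.norm_conj]
        gcongr
        exact norm_sum_paraPhase_le he hF _
    _ = N * ∑ x, ‖g x‖ ^ 2 + √N * (∑ x, ‖g x‖) ^ 2 := by
        simp only [mul_add, Finset.sum_add_distrib, sub_eq_zero, mul_ite, mul_zero,
          Finset.sum_ite_eq', Finset.mem_univ, if_true]
        rw [sq (∑ x, ‖g x‖), Fintype.sum_mul_sum]
        simp_rw [Finset.mul_sum]
        congr 1
        · exact Finset.sum_congr rfl fun x _ => by ring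
        · exact Finset.sum_congr rfl fun x _ => Finset.sum_congr rfl fun x' _ => by ring

lemma l2P_le_sqrt_add (he : e ≠ 1) (hF : ringChar F ≠ 2) (g : (Fin (d - 1) → F) × F → ℂ) :
    l2P e g ≤ √(∑ x, ‖g x‖ ^ 2) +
      ((Fintype.card F : ℝ) ^ (d - 1)) ^ (-(1 / 4 : ℝ)) * ∑ x, ‖g x‖ := by
  set N : ℝ := (Fintype.card F : ℝ) ^ (d - 1)
  have hN : 0 < N := by positivity
  have hsqrt_add : ∀ {a b : ℝ}, 0 ≤ a → 0 ≤ b → √(a + b) ≤ √a + √b := fun {a b} ha hb =>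
    Real.sqrt_le_iff.mpr ⟨by positivity, by
      nlinarith [Real.sq_sqrt ha, Real.sq_sqrt hb, Real.sqrt_nonneg a, Real.sqrt_nonneg b]⟩
  have hexp : √(N⁻¹ * √N) = N ^ (-(1 / 4 : ℝ)) := by
    rw [Real.sqrt_eq_rpow, Real.sqrt_eq_rpow, ← Real.rpow_neg_one, ← Real.rpow_add hN,
      ← Real.rpow_mul hN.le]
    norm_num
  calc l2P e g = √(N⁻¹ * ∑ y, ‖fourierP e g y‖ ^ 2) := by rw [l2P, Real.sqrt_eq_rpow]
    _ ≤ √(∑ x, ‖g x‖ ^ 2 + N⁻¹ * √N * (∑ x, ‖g x‖) ^ 2) := by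
        gcongr
        calc N⁻¹ * ∑ y, ‖fourierP e g y‖ ^ 2
            ≤ N⁻¹ * (N * ∑ x, ‖g x‖ ^ 2 + √N * (∑ x, ‖g x‖) ^ 2) := by
              gcongr; exact sum_norm_fourierP_sq_le he hF g
          _ = _ := by field_simp
    _ ≤ √(∑ x, ‖g x‖ ^ 2) + N ^ (-(1 / 4 : ℝ)) * ∑ x, ‖g x‖ := by
        refine (hsqrt_add (by positivity) (by positivity)).trans_eq ?_
        rw [Real.sqrt_mul (by positivity), Real.sqrt_sq (by positivity), hexp]

end FourierParaboloid

section Truncation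

lemma rpow_le_rpow_sub_mul_rpow {a t p r : ℝ} (ha : 0 ≤ a) (hat : a ≤ t) (hp : 0 < p)
    (hpr : p ≤ r) : a ^ r ≤ t ^ (r - p) * a ^ p := by
  calc a ^ r = a ^ (r - p) * a ^ p := by
        rw [← Real.rpow_add' ha (by linarith), sub_add_cancel]
    _ ≤ t ^ (r - p) * a ^ p := by gcongr

lemma le_rpow_sub_mul_rpow {a t p : ℝ} (ht : 0 < t) (hta : t ≤ a) (hp : 1 ≤ p) :
    a ≤ t ^ (1 - p) * a ^ p := by
  calc a = a ^ (1 - p) * a ^ p := by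
        rw [← Real.rpow_add' (ht.le.trans hta) (by norm_num), sub_add_cancel, Real.rpow_one]
    _ ≤ t ^ (1 - p) * a ^ p :=
        mul_le_mul_of_nonneg_right (Real.rpow_le_rpow_of_nonpos ht hta (by linarith))
          (Real.rpow_nonneg (ht.le.trans hta) p)

variable {X : Type*}

noncomputable def truncBelow (g : X → ℂ) (t : ℝ) : X → ℂ := {x | ‖g x‖ ≤ t}.indicator g

noncomputable def truncAbove (g : X → ℂ) (t : ℝ) : X → ℂ := {x | ‖g x‖ ≤ t}ᶜ.indicator g

lemma truncBelow_add_truncAbove (g : X → ℂ) (t : ℝ) : truncBelow g t + truncAbove g t = g :=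
  Set.indicator_self_add_compl _ g

lemma norm_truncBelow_le_norm (g : X → ℂ) (t : ℝ) (x : X) : ‖truncBelow g t x‖ ≤ ‖g x‖ :=
  norm_indicator_le_norm_self g x

lemma norm_truncAbove_le_norm (g : X → ℂ) (t : ℝ) (x : X) : ‖truncAbove g t x‖ ≤ ‖g x‖ :=
  norm_indicator_le_norm_self g x

lemma norm_truncBelow_le (g : X → ℂ) {t : ℝ} (ht : 0 ≤ t) (x : X) : ‖truncBelow g t x‖ ≤ t := by
  by_cases hx : ‖g x‖ ≤ t
  · rwa [truncBelow, Set.indicator_of_mem (show x ∈ {x | ‖g x‖ ≤ t} from hx)]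
  · rwa [truncBelow, Set.indicator_of_notMem (show x ∉ {x | ‖g x‖ ≤ t} from hx), norm_zero]

lemma le_norm_truncAbove {g : X → ℂ} {t : ℝ} {x : X} (hx : truncAbove g t x ≠ 0) :
    t ≤ ‖truncAbove g t x‖ := by
  have hxS := Set.mem_of_indicator_ne_zero hx
  rw [truncAbove, Set.indicator_of_mem hxS]
  exact (not_le.mp (show ¬‖g x‖ ≤ t from hxS)).le

variable [Fintype X]

lemma sum_norm_rpow_le_of_norm_le {u g : X → ℂ} {t p r : ℝ} (hug : ∀ x, ‖u x‖ ≤ ‖g x‖)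
    (hut : ∀ x, ‖u x‖ ≤ t) (hp : 0 < p) (hpr : p ≤ r) :
    ∑ x, ‖u x‖ ^ r ≤ t ^ (r - p) * ∑ x, ‖g x‖ ^ p := by
  rw [Finset.mul_sum]
  refine Finset.sum_le_sum fun x _ => ?_
  have ht : 0 ≤ t := (norm_nonneg _).trans (hut x)
  calc ‖u x‖ ^ r ≤ t ^ (r - p) * ‖u x‖ ^ p :=
        rpow_le_rpow_sub_mul_rpow (norm_nonneg _) (hut x) hp hpr
    _ ≤ t ^ (r - p) * ‖g x‖ ^ p := by gcongr; exact hug x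

lemma sum_norm_le_of_le_norm {u g : X → ℂ} {t p : ℝ} (ht : 0 < t) (hug : ∀ x, ‖u x‖ ≤ ‖g x‖)
    (htu : ∀ x, u x ≠ 0 → t ≤ ‖u x‖) (hp : 1 ≤ p) :
    ∑ x, ‖u x‖ ≤ t ^ (1 - p) * ∑ x, ‖g x‖ ^ p := by
  rw [Finset.mul_sum]
  refine Finset.sum_le_sum fun x _ => ?_
  by_cases hx : u x = 0
  · rw [hx, norm_zero]
    positivity
  calc ‖u x‖ ≤ t ^ (1 - p) * ‖u x‖ ^ p := le_rpow_sub_mul_rpow ht (htu x hx) hp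
    _ ≤ t ^ (1 - p) * ‖g x‖ ^ p := by gcongr; exact hug x

lemma norm_le_of_sum_rpow_eq {g : X → ℂ} {p A : ℝ} (hp : 0 < p) (hA : 0 ≤ A)
    (hSp : ∑ x, ‖g x‖ ^ p = A ^ p) (x : X) : ‖g x‖ ≤ A :=
  (Real.rpow_le_rpow_iff (norm_nonneg _) hA hp).mp
    (hSp ▸ Finset.single_le_sum (f := fun x => ‖g x‖ ^ p) (fun x _ => by positivity)
      (Finset.mem_univ x))

lemma apply_truncBelow_le (T : (X → ℂ) → ℝ) {N c p p₀ A : ℝ} (hN : 0 < N) (hc : 0 ≤ c)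
    (hp : 0 < p) (hpp₀ : p ≤ p₀)
    (hstrong : ∀ u, T u ≤ c * N ^ ((p₀ - p) / (4 * p * p₀)) * (∑ x, ‖u x‖ ^ p₀) ^ (1 / p₀))
    {g : X → ℂ} (hA : 0 < A) (hSp : ∑ x, ‖g x‖ ^ p = A ^ p) :
    T (truncBelow g (N ^ (-(1 / (4 * p))) * A)) ≤ c * A := by
  set t := N ^ (-(1 / (4 * p))) * A
  set ε := (p₀ - p) / (4 * p * p₀)
  have hp₀ : 0 < p₀ := hp.trans_le hpp₀
  have hsum : ∑ x, ‖truncBelow g t x‖ ^ p₀ ≤ (N ^ (-ε) * A) ^ p₀ :=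
    calc ∑ x, ‖truncBelow g t x‖ ^ p₀ ≤ t ^ (p₀ - p) * A ^ p :=
          hSp ▸ sum_norm_rpow_le_of_norm_le (norm_truncBelow_le_norm g t)
            (norm_truncBelow_le g (by positivity)) hp hpp₀
      _ = (N ^ (-ε) * A) ^ p₀ := by
          rw [Real.mul_rpow (by positivity) hA.le, Real.mul_rpow (by positivity) hA.le,
            ← Real.rpow_mul hN.le, ← Real.rpow_mul hN.le, mul_assoc,
            ← Real.rpow_add hA, sub_add_cancel]
          congr 2
          simp only [ε]
          field_simp
  calc T (truncBelow g t) ≤ c * N ^ ε * (∑ x, ‖truncBelow g t x‖ ^ p₀) ^ (1 / p₀) := hstrong _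
    _ ≤ c * N ^ ε * (N ^ (-ε) * A) := by
        gcongr
        rwa [one_div, Real.rpow_inv_le_iff_of_pos (by positivity) (by positivity) hp₀]
    _ = c * A := by
        rw [Real.rpow_neg hN.le]
        field_simp

lemma apply_truncAbove_le (T : (X → ℂ) → ℝ) {N p A : ℝ} (hN : 1 ≤ N) (hp : 1 ≤ p) (hp₂ : p ≤ 2)
    (hweak : ∀ u, T u ≤ √(∑ x, ‖u x‖ ^ 2) + N ^ (-(1 / 4 : ℝ)) * ∑ x, ‖u x‖)
    {g : X → ℂ} (hA : 0 < A) (hSp : ∑ x, ‖g x‖ ^ p = A ^ p) :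
    T (truncAbove g (N ^ (-(1 / (4 * p))) * A)) ≤ 2 * A := by
  set t := N ^ (-(1 / (4 * p))) * A
  have hN0 : 0 < N := by linarith
  have hp0 : 0 < p := by linarith
  have hsq : √(∑ x, ‖truncAbove g t x‖ ^ 2) ≤ A := by
    refine Real.sqrt_le_iff.mpr ⟨hA.le, ?_⟩
    have := sum_norm_rpow_le_of_norm_le (norm_truncAbove_le_norm g t)
      (fun x => (norm_truncAbove_le_norm g t x).trans (norm_le_of_sum_rpow_eq hp0 hA.le hSp x))
      hp0 hp₂
    rw [hSp, ← Real.rpow_add hA, sub_add_cancel] at this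
    exact_mod_cast this
  have hlin : N ^ (-(1 / 4 : ℝ)) * ∑ x, ‖truncAbove g t x‖ ≤ A :=
    calc N ^ (-(1 / 4 : ℝ)) * ∑ x, ‖truncAbove g t x‖
        ≤ N ^ (-(1 / 4 : ℝ)) * (t ^ (1 - p) * A ^ p) := by
          gcongr
          exact hSp ▸ sum_norm_le_of_le_norm (by positivity) (norm_truncAbove_le_norm g t)
            (fun x => le_norm_truncAbove) hp
      _ = N ^ (-(1 / (4 * p))) * A := by
          rw [Real.mul_rpow (by positivity) hA.le, ← Real.rpow_mul hN0.le, mul_assoc,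
            ← Real.rpow_add hA, sub_add_cancel, Real.rpow_one, ← mul_assoc,
            ← Real.rpow_add hN0]
          congr 2
          field_simp
          ring
      _ ≤ A := mul_le_of_le_one_left hA.le
          (Real.rpow_le_one_of_one_le_of_nonpos hN (by rw [neg_nonpos]; positivity))
  calc T (truncAbove g t)
      ≤ √(∑ x, ‖truncAbove g t x‖ ^ 2) + N ^ (-(1 / 4 : ℝ)) * ∑ x, ‖truncAbove g t x‖ :=
        hweak _
    _ ≤ A + A := add_le_add hsq hlin
    _ = 2 * A := by ring

theorem le_mul_sum_rpow_of_truncation (T : (X → ℂ) → ℝ) (hT : ∀ u v, T (u + v) ≤ T u + T v)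
    {N c p p₀ : ℝ} (hN : 1 ≤ N) (hc : 0 ≤ c) (hp : 1 ≤ p) (hpp₀ : p < p₀) (hp₀ : p₀ ≤ 2)
    (hstrong : ∀ u, T u ≤ c * N ^ ((p₀ - p) / (4 * p * p₀)) * (∑ x, ‖u x‖ ^ p₀) ^ (1 / p₀))
    (hweak : ∀ u, T u ≤ √(∑ x, ‖u x‖ ^ 2) + N ^ (-(1 / 4 : ℝ)) * ∑ x, ‖u x‖) (g : X → ℂ) :
    T g ≤ (c + 2) * (∑ x, ‖g x‖ ^ p) ^ (1 / p) := by
  have hp0 : 0 < p := by linarith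
  set A := (∑ x, ‖g x‖ ^ p) ^ (1 / p)
  have hSp : ∑ x, ‖g x‖ ^ p = A ^ p := by
    rw [← Real.rpow_mul (by positivity), one_div_mul_cancel hp0.ne', Real.rpow_one]
  rcases (show 0 ≤ A by positivity).eq_or_lt with hA0 | hA
  · have hg : g = 0 := funext fun x =>
      norm_le_zero_iff.mp (hA0 ▸ norm_le_of_sum_rpow_eq hp0 hA0.le hSp x)
    simpa [hg, ← hA0] using hweak 0
  set t := N ^ (-(1 / (4 * p))) * A
  calc T g = T (truncBelow g t + truncAbove g t) := by rw [truncBelow_add_truncAbove]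
    _ ≤ T (truncBelow g t) + T (truncAbove g t) := hT _ _
    _ ≤ c * A + 2 * A := add_le_add
        (apply_truncBelow_le T (by linarith) hc hp0 hpp₀.le hstrong hA hSp)
        (apply_truncAbove_le T hN hp (by linarith) hweak hA hSp)
    _ = (c + 2) * A := by ring

end Truncation

theorem stmt17_general (d : ℕ) (hd : 2 ≤ d) (p₀ : ℝ) (hp₀' : p₀ ≤ 2)
    (h : ∀ ε : ℝ, 0 < ε → ∃ c : ℝ, 0 < c ∧
      ∀ (F : Type) [Field F] [Fintype F], ringChar F ≠ 2 →
      ∀ (e : AddChar F ℂ), e ≠ 1 →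
      ∀ g : (Fin (d - 1) → F) × F → ℂ,
        l2P e g ≤ c * (Fintype.card F : ℝ) ^ ε *
          (∑ x : (Fin (d - 1) → F) × F, ‖g x‖ ^ p₀) ^ (1 / p₀)) :
    ∀ p : ℝ, 1 ≤ p → p < p₀ →
      ∃ C : ℝ, 0 < C ∧
        ∀ (F : Type) [Field F] [Fintype F], ringChar F ≠ 2 →
        ∀ (e : AddChar F ℂ), e ≠ 1 →
        ∀ g : (Fin (d - 1) → F) × F → ℂ,
          l2P e g ≤ C * (∑ x : (Fin (d - 1) → F) × F, ‖g x‖ ^ p) ^ (1 / p) := by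
  intro p hp hpp₀
  have hε : 0 < ((d - 1 : ℕ) : ℝ) * ((p₀ - p) / (4 * p * p₀)) := by
    have hd1 : (0 : ℝ) < (d - 1 : ℕ) := by exact_mod_cast (by omega : 0 < d - 1)
    have hp0 : 0 < p := by linarith
    exact mul_pos hd1 (div_pos (by linarith) (by nlinarith))
  obtain ⟨c, hc, hstrong⟩ := h _ hε
  refine ⟨c + 2, by linarith, fun F _ _ hF e he g => ?_⟩
  refine le_mul_sum_rpow_of_truncation (l2P e) (l2P_add_le e)
    (one_le_pow₀ (Nat.one_le_cast.mpr Fintype.card_pos)) hc.le hp hpp₀ hp₀' (fun u => ?_)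
    (l2P_le_sqrt_add he hF) g
  rw [← Real.rpow_natCast_mul (Nat.cast_nonneg _)]
  exact hstrong F hF e he u

/-- Epsilon removal: fix `d ≥ 2` and `1 < p₀ ≤ 2`. If for every `ε > 0` there is
`c(ε) > 0` with `‖ĝ‖_{L²(P,dσ)} ≤ c(ε) |F|^ε ‖g‖_{L^{p₀}(F^d)}` for all finite fields `F`
of odd characteristic, all nontrivial additive characters, and all `g`, then for every
`1 ≤ p < p₀` there is `C > 0` with `‖ĝ‖_{L²(P,dσ)} ≤ C ‖g‖_{L^p(F^d)}` for all such
`F`, `e`, `g`. -/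
theorem stmt17 (d : ℕ) (hd : 2 ≤ d) (p₀ : ℝ) (hp₀ : 1 < p₀) (hp₀' : p₀ ≤ 2)
    (h : ∀ ε : ℝ, 0 < ε → ∃ c : ℝ, 0 < c ∧
      ∀ (F : Type) [Field F] [Fintype F], ringChar F ≠ 2 →
      ∀ (e : AddChar F ℂ), e ≠ 1 →
      ∀ g : (Fin (d - 1) → F) × F → ℂ,
        l2P e g ≤ c * (Fintype.card F : ℝ) ^ ε *
          (∑ x : (Fin (d - 1) → F) × F, ‖g x‖ ^ p₀) ^ (1 / p₀)) :
    ∀ p : ℝ, 1 ≤ p → p < p₀ →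
      ∃ C : ℝ, 0 < C ∧
        ∀ (F : Type) [Field F] [Fintype F], ringChar F ≠ 2 →
        ∀ (e : AddChar F ℂ), e ≠ 1 →
        ∀ g : (Fin (d - 1) → F) × F → ℂ,
          l2P e g ≤ C * (∑ x : (Fin (d - 1) → F) × F, ‖g x‖ ^ p) ^ (1 / p) :=
  stmt17_general d hd p₀ hp₀' h
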